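/- Let α > −1 and β > −1 be real numbers and n ≥ 1 an integer. Then for all real x, (1−x²) (d²/dx²) Q_n^{(α,β)}(x) + [β−α−(α+β+2)x] (d/dx) Q_n^{(α,β)}(x) + n(n+α+β+1) Q_n^{(α,β)}(x) = [(β+1)_n (α+β+2)_n / ((α+1)_{n−1} n!)] P_{n−1}^{(α,β+2)}(x). -/

import Mathlib

/-- The Pochhammer symbol (rising factorial) `(a)_k = a (a+1) ⋯ (a+k-1)`. -/
noncomputable def poch (a : ℝ) (k : ℕ) : ℝ := (ascPochhammer ℝ k).eval a

/-- The Jacobi polynomial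
`P_n^{(α,β)}(x) = Σ_{k=0}^{n} [(n+α+β+1)_k / k!] [(α+k+1)_{n−k} / (n−k)!] ((x−1)/2)^k`,
valid for all real `α`, `β`. -/
noncomputable def jacobiP (α β : ℝ) (n : ℕ) (x : ℝ) : ℝ :=
  ∑ k ∈ Finset.range (n + 1),
    poch ((n : ℝ) + α + β + 1) k / Nat.factorial k *
      (poch (α + k + 1) (n - k) / Nat.factorial (n - k)) * ((x - 1) / 2) ^ k

/-- `Q_n^{(α,β)}(x) = [(β+2)_{n−1} (α+β+2)_{n−1} / ((α+1)_n n!)]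
`[n(n+α+β+1) P_n^{(α,β)}(x) − (β+1)(x−1) P_n^{(α,β)}'(x)]`. -/
noncomputable def Qfun (α β : ℝ) (n : ℕ) (x : ℝ) : ℝ :=
  poch (β + 2) (n - 1) * poch (α + β + 2) (n - 1) / (poch (α + 1) n * Nat.factorial n) *
    ((n : ℝ) * ((n : ℝ) + α + β + 1) * jacobiP α β n x -
      (β + 1) * (x - 1) * deriv (jacobiP α β n) x)

lemma poch_succ_right (a : ℝ) (n : ℕ) : poch a (n+1) = poch a n * (a + n) :=
  ascPochhammer_succ_eval n a

lemma poch_succ_left (a : ℝ) (n : ℕ) : poch a (n+1) = a * poch (a+1) n := by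
  simp [poch, ascPochhammer_succ_left, Polynomial.eval_comp]

lemma poch_pos (a : ℝ) (n : ℕ) (h : 0 < a) : 0 < poch a n := ascPochhammer_pos n a h

/-- Coefficients of the Jacobi polynomial in powers of `(x-1)/2`. -/
noncomputable def aco (α β : ℝ) (n k : ℕ) : ℝ :=
  poch ((n : ℝ) + α + β + 1) k / Nat.factorial k *
    (poch (α + k + 1) (n - k) / Nat.factorial (n - k))

lemma jacobiP_eq (α β : ℝ) (n : ℕ) :
    jacobiP α β n = fun x => ∑ k ∈ Finset.range (n+1), aco α β n k * ((x-1)/2)^k := rfl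

lemma hasDerivAt_tpow (k : ℕ) (x : ℝ) :
    HasDerivAt (fun y : ℝ => ((y-1)/2)^k) ((k:ℝ) * ((x-1)/2)^(k-1) * (1/2)) x := by
  have h : HasDerivAt (fun y : ℝ => (y-1)/2) (1/2) x := ((hasDerivAt_id x).sub_const 1).div_const 2
  exact h.pow k

lemma hasDerivAt_sum_tpow (c : ℕ → ℝ) (N : ℕ) (x : ℝ) :
    HasDerivAt (fun y => ∑ k ∈ Finset.range N, c k * ((y-1)/2)^k)
      (∑ k ∈ Finset.range N, c k * ((k:ℝ) * ((x-1)/2)^(k-1)) / 2) x := by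
  refine HasDerivAt.fun_sum fun k _ => ?_
  have := (hasDerivAt_tpow k x).const_mul (c k)
  refine this.congr_deriv ?_
  ring

lemma deriv_sum_tpow (c : ℕ → ℝ) (N : ℕ) (x : ℝ) :
    deriv (fun y => ∑ k ∈ Finset.range N, c k * ((y-1)/2)^k) x
      = ∑ k ∈ Finset.range N, c k * ((k:ℝ) * ((x-1)/2)^(k-1)) / 2 :=
  (hasDerivAt_sum_tpow c N x).deriv

/-- Coefficients of `Qfun` in powers of `(x-1)/2`. -/
noncomputable def sco (α β : ℝ) (n k : ℕ) : ℝ :=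
  poch (β+2) (n-1) * poch (α+β+2) (n-1) / (poch (α+1) n * Nat.factorial n) *
    ((n:ℝ) * ((n:ℝ)+α+β+1) - (β+1)*(k:ℝ)) * aco α β n k

lemma Qfun_eq (α β : ℝ) (n : ℕ) :
    Qfun α β n = fun x => ∑ k ∈ Finset.range (n+1), sco α β n k * ((x-1)/2)^k := by
  funext x
  rw [Qfun, jacobiP_eq, deriv_sum_tpow, Finset.mul_sum, Finset.mul_sum,
    ← Finset.sum_sub_distrib, Finset.mul_sum]
  refine Finset.sum_congr rfl fun k _ => ?_
  unfold sco
  cases k with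
  | zero => simp; ring
  | succ k =>
    simp only [Nat.add_sub_cancel, pow_succ]
    push_cast
    ring

lemma deriv_Qfun_eq (α β : ℝ) (n : ℕ) :
    deriv (Qfun α β n) = fun x => ∑ j ∈ Finset.range n,
      ((j:ℝ)+1) * sco α β n (j+1) / 2 * ((x-1)/2)^j := by
  funext x
  rw [Qfun_eq, deriv_sum_tpow, Finset.sum_range_succ']
  simp only [Nat.cast_zero, zero_mul, mul_zero, zero_div, add_zero, Nat.add_sub_cancel]
  refine Finset.sum_congr rfl fun j _ => ?_
  push_cast
  ring

lemma iteratedDeriv2_Qfun (α β : ℝ) (m : ℕ) :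
    iteratedDeriv 2 (Qfun α β (m+1)) = fun x => ∑ i ∈ Finset.range m,
      ((i:ℝ)+2) * ((i:ℝ)+1) * sco α β (m+1) (i+2) / 4 * ((x-1)/2)^i := by
  rw [iteratedDeriv_succ, iteratedDeriv_one, deriv_Qfun_eq]
  funext x
  rw [deriv_sum_tpow, Finset.sum_range_succ']
  simp only [Nat.cast_zero, zero_mul, mul_zero, zero_div, add_zero, Nat.add_sub_cancel]
  refine Finset.sum_congr rfl fun i _ => ?_
  push_cast
  ring

lemma shift2 (g : ℕ → ℝ) (N : ℕ) (T : ℝ) (h0 : g 0 = 0) (h1 : g 1 = 0) :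
    ∑ k ∈ Finset.range (N+2), g k * T^k = ∑ i ∈ Finset.range N, g (i+2) * T^(i+2) := by
  rw [Finset.sum_range_succ', Finset.sum_range_succ']
  simp [h0, h1]

lemma shift1 (g : ℕ → ℝ) (N : ℕ) (T : ℝ) (h0 : g 0 = 0) :
    ∑ k ∈ Finset.range (N+1), g k * T^k = ∑ i ∈ Finset.range N, g (i+1) * T^(i+1) := by
  rw [Finset.sum_range_succ']
  simp [h0]

set_option maxHeartbeats 1000000 in
/-- The key coefficient identity. -/
lemma key (α β : ℝ) (hα : -1 < α) (hβ : -1 < β) (m k : ℕ) (hk : k ≤ m) :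
    ((m:ℝ)+1-(k:ℝ)) * ((m:ℝ)+1+(k:ℝ)+α+β+1) * sco α β (m+1) k
      - ((k:ℝ)+1)*((k:ℝ)+α+1) * sco α β (m+1) (k+1)
    = poch (β+1) (m+1) * poch (α+β+2) (m+1) / (poch (α+1) m * Nat.factorial (m+1)) *
        aco α (β+2) m k := by
  have hk1 : m+1-k = (m-k)+1 := by omega
  have hk2 : m+1-(k+1) = m-k := by omega
  have hkc : (0:ℝ) ≤ (k:ℝ) := Nat.cast_nonneg k
  have hmc : (0:ℝ) ≤ (m:ℝ) := Nat.cast_nonneg m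
  have hYne : α+(k:ℝ)+1 ≠ 0 := by linarith
  have hBne : ((m+1:ℕ):ℝ)+α+β+1 ≠ 0 := by push_cast; linarith
  simp only [sco, aco, Nat.add_sub_cancel, hk1, hk2]
  rw [poch_succ_right (α+(k:ℝ)+1) (m-k)]
  rw [Nat.factorial_succ (m-k)]
  rw [poch_succ_right (((m+1:ℕ):ℝ)+α+β+1) k]
  rw [Nat.factorial_succ k]
  rw [poch_succ_right (α+1) m]
  rw [poch_succ_right (α+β+2) m]
  rw [show poch (β+1) (m+1) = (β+1) * poch (β+2) m from by
        have := poch_succ_left (β+1) m; rw [show β+1+1 = β+2 from by ring] at this; exact this]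
  rw [show α+((k+1:ℕ):ℝ)+1 = α+(k:ℝ)+1+1 from by push_cast; ring]
  have hA' : poch (α+(k:ℝ)+1+1) (m-k)
      = (α+1+(m:ℝ)) * poch (α+(k:ℝ)+1) (m-k) / (α+(k:ℝ)+1) := by
    have h1 := poch_succ_right (α+(k:ℝ)+1) (m-k)
    have h2 := poch_succ_left (α+(k:ℝ)+1) (m-k)
    rw [Nat.cast_sub hk] at h1
    rw [eq_div_iff hYne]
    linear_combination h2.symm.trans h1
  have hBp : poch ((m:ℝ)+α+(β+2)+1) k
      = poch (((m+1:ℕ):ℝ)+α+β+1) k * (((m+1:ℕ):ℝ)+α+β+1+(k:ℝ)) / (((m+1:ℕ):ℝ)+α+β+1) := by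
    have h1 := poch_succ_right (((m+1:ℕ):ℝ)+α+β+1) k
    have h2 := poch_succ_left (((m+1:ℕ):ℝ)+α+β+1) k
    rw [show ((m+1:ℕ):ℝ)+α+β+1+1 = (m:ℝ)+α+(β+2)+1 from by push_cast; ring] at h2
    rw [eq_div_iff hBne]
    linear_combination h2.symm.trans h1
  rw [hA', hBp]
  have f1 : ((Nat.factorial k : ℕ):ℝ) ≠ 0 := Nat.cast_ne_zero.mpr (Nat.factorial_ne_zero k)
  have f2 : ((Nat.factorial (m-k) : ℕ):ℝ) ≠ 0 := Nat.cast_ne_zero.mpr (Nat.factorial_ne_zero _)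
  have f3 : ((Nat.factorial (m+1) : ℕ):ℝ) ≠ 0 := Nat.cast_ne_zero.mpr (Nat.factorial_ne_zero _)
  have hp3 : poch (α+1) m ≠ 0 := ne_of_gt (poch_pos _ _ (by linarith))
  have ham : α+1+(m:ℝ) ≠ 0 := by linarith
  push_cast
  simp only [Nat.cast_sub hk]
  set P1 := poch (β+2) m with hP1
  set P2 := poch (α+β+2) m with hP2
  set P3 := poch (α+1) m with hP3
  set B := poch ((m:ℝ)+1+α+β+1) k with hB
  set Y := poch (α+(k:ℝ)+1) (m-k) with hYY
  set F1 : ℝ := (Nat.factorial k : ℝ) with hF1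
  set F2 : ℝ := (Nat.factorial (m-k) : ℝ) with hF2
  set F3 : ℝ := (Nat.factorial (m+1) : ℝ) with hF3
  have hBne' : (m:ℝ)+1+α+β+1 ≠ 0 := by intro h; nlinarith
  have hk3 : (k:ℝ)+1 ≠ 0 := by positivity
  have hmk : (m:ℝ)-(k:ℝ)+1 ≠ 0 := by
    have : (k:ℝ) ≤ (m:ℝ) := Nat.cast_le.mpr hk
    intro h; linarith
  field_simp
  ring

/-- the Jacobi differential operator applied to `Q_n^{(α,β)}` gives
`[(β+1)_n (α+β+2)_n / ((α+1)_{n−1} n!)] P_{n−1}^{(α,β+2)}(x)`. -/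
theorem jacobi_operator_Qfun (α β : ℝ) (hα : -1 < α) (hβ : -1 < β)
    (n : ℕ) (hn : 1 ≤ n) (x : ℝ) :
    (1 - x ^ 2) * iteratedDeriv 2 (Qfun α β n) x +
      (β - α - (α + β + 2) * x) * deriv (Qfun α β n) x +
      (n : ℝ) * ((n : ℝ) + α + β + 1) * Qfun α β n x
    = poch (β + 1) n * poch (α + β + 2) n / (poch (α + 1) (n - 1) * Nat.factorial n) *
        jacobiP α (β + 2) (n - 1) x := by
  obtain ⟨m, rfl⟩ : ∃ m, n = m + 1 := ⟨n - 1, by omega⟩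
  simp only [iteratedDeriv2_Qfun, deriv_Qfun_eq]
  simp only [Qfun_eq, jacobiP_eq, Nat.add_sub_cancel]
  set T : ℝ := (x - 1)/2 with hT
  have hx2 : 1 - x^2 = -4*T^2 - 4*T := by rw [hT]; ring
  have hx1 : β - α - (α+β+2)*x = -2*(α+1) - 2*(α+β+2)*T := by rw [hT]; ring
  set lR : ℝ := ((m+1:ℕ):ℝ) * (((m+1:ℕ):ℝ) + α + β + 1) with hlR
  -- Step 1: expand the three products
  have e1 : (1 - x^2) * ∑ i ∈ Finset.range m,
        ((i:ℝ)+2) * ((i:ℝ)+1) * sco α β (m+1) (i+2) / 4 * T^i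
      = (∑ i ∈ Finset.range m, (-((i:ℝ)+2)*((i:ℝ)+1)*sco α β (m+1) (i+2)) * T^(i+2))
        + (∑ i ∈ Finset.range m, (-((i:ℝ)+2)*((i:ℝ)+1)*sco α β (m+1) (i+2)) * T^(i+1)) := by
    rw [Finset.mul_sum, ← Finset.sum_add_distrib]
    refine Finset.sum_congr rfl fun i _ => ?_
    rw [hx2]; ring
  have e2 : (β - α - (α+β+2)*x) * ∑ j ∈ Finset.range (m+1),
        ((j:ℝ)+1) * sco α β (m+1) (j+1) / 2 * T^j
      = (∑ j ∈ Finset.range (m+1), (-(α+1)*((j:ℝ)+1)*sco α β (m+1) (j+1)) * T^j)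
        + (∑ j ∈ Finset.range (m+1), (-(α+β+2)*((j:ℝ)+1)*sco α β (m+1) (j+1)) * T^(j+1)) := by
    rw [Finset.mul_sum, ← Finset.sum_add_distrib]
    refine Finset.sum_congr rfl fun j _ => ?_
    rw [hx1]; ring
  have e3 : lR * ∑ k ∈ Finset.range (m+2), sco α β (m+1) k * T^k
      = ∑ k ∈ Finset.range (m+2), (lR * sco α β (m+1) k) * T^k := by
    rw [Finset.mul_sum]
    exact Finset.sum_congr rfl fun k _ => by ring
  -- Step 2: reindex the shifted sums
  have r1 : (∑ i ∈ Finset.range m, (-((i:ℝ)+2)*((i:ℝ)+1)*sco α β (m+1) (i+2)) * T^(i+2))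
      = ∑ k ∈ Finset.range (m+2), (-(k:ℝ)*((k:ℝ)-1)*sco α β (m+1) k) * T^k := by
    rw [shift2 (fun k => -(k:ℝ)*((k:ℝ)-1)*sco α β (m+1) k) m T (by simp) (by simp)]
    refine Finset.sum_congr rfl fun i _ => ?_
    push_cast; ring
  have r2 : (∑ i ∈ Finset.range m, (-((i:ℝ)+2)*((i:ℝ)+1)*sco α β (m+1) (i+2)) * T^(i+1))
      = ∑ k ∈ Finset.range (m+1), (-(k:ℝ)*((k:ℝ)+1)*sco α β (m+1) (k+1)) * T^k := by
    rw [shift1 (fun k => -(k:ℝ)*((k:ℝ)+1)*sco α β (m+1) (k+1)) m T (by simp)]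
    refine Finset.sum_congr rfl fun i _ => ?_
    push_cast; ring
  have r3 : (∑ j ∈ Finset.range (m+1), (-(α+β+2)*((j:ℝ)+1)*sco α β (m+1) (j+1)) * T^(j+1))
      = ∑ k ∈ Finset.range (m+2), (-(α+β+2)*(k:ℝ)*sco α β (m+1) k) * T^k := by
    rw [shift1 (fun k => -(α+β+2)*(k:ℝ)*sco α β (m+1) k) (m+1) T (by simp)]
    refine Finset.sum_congr rfl fun j _ => ?_
    push_cast; ring
  rw [e1, e2, e3, r1, r2, r3]
  -- Step 3: group the range (m+2) sums and the range (m+1) sums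
  have g1 : (∑ k ∈ Finset.range (m+2), (-(k:ℝ)*((k:ℝ)-1)*sco α β (m+1) k) * T^k)
        + (∑ k ∈ Finset.range (m+2), (-(α+β+2)*(k:ℝ)*sco α β (m+1) k) * T^k)
        + (∑ k ∈ Finset.range (m+2), (lR * sco α β (m+1) k) * T^k)
      = ∑ k ∈ Finset.range (m+1),
          (((m:ℝ)+1-(k:ℝ)) * ((m:ℝ)+1+(k:ℝ)+α+β+1) * sco α β (m+1) k) * T^k := by
    rw [← Finset.sum_add_distrib, ← Finset.sum_add_distrib, Finset.sum_range_succ]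
    have hz : -((m+1:ℕ):ℝ)*(((m+1:ℕ):ℝ)-1)*sco α β (m+1) (m+1) * T^(m+1)
        + -(α+β+2)*((m+1:ℕ):ℝ)*sco α β (m+1) (m+1) * T^(m+1)
        + lR * sco α β (m+1) (m+1) * T^(m+1) = 0 := by
      rw [hlR]; push_cast; ring
    rw [hz, add_zero]
    refine Finset.sum_congr rfl fun k hk => ?_
    rw [hlR]; push_cast; ring
  have g2 : (∑ k ∈ Finset.range (m+1), (-(α+1)*((k:ℝ)+1)*sco α β (m+1) (k+1)) * T^k)
        + (∑ k ∈ Finset.range (m+1), (-(k:ℝ)*((k:ℝ)+1)*sco α β (m+1) (k+1)) * T^k)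
      = ∑ k ∈ Finset.range (m+1), (-(((k:ℝ)+1)*((k:ℝ)+α+1)) * sco α β (m+1) (k+1)) * T^k := by
    rw [← Finset.sum_add_distrib]
    exact Finset.sum_congr rfl fun k _ => by ring
  -- Step 4: put everything together and use the key identity
  have total : ∀ a1 a2 b1 b2 c s : ℝ, a1 + a2 = s - (b1 + b2) →
      (a1 + b1) + (b2 + a2) + c = s - (b1+b2) + (b1+b2) + c - c + c := by intros; linarith
  calc (∑ k ∈ Finset.range (m+2), (-(k:ℝ)*((k:ℝ)-1)*sco α β (m+1) k) * T^k
          + ∑ k ∈ Finset.range (m+1), (-(k:ℝ)*((k:ℝ)+1)*sco α β (m+1) (k+1)) * T^k)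
        + (∑ k ∈ Finset.range (m+1), (-(α+1)*((k:ℝ)+1)*sco α β (m+1) (k+1)) * T^k
          + ∑ k ∈ Finset.range (m+2), (-(α+β+2)*(k:ℝ)*sco α β (m+1) k) * T^k)
        + ∑ k ∈ Finset.range (m+2), (lR * sco α β (m+1) k) * T^k
      = ((∑ k ∈ Finset.range (m+2), (-(k:ℝ)*((k:ℝ)-1)*sco α β (m+1) k) * T^k)
          + (∑ k ∈ Finset.range (m+2), (-(α+β+2)*(k:ℝ)*sco α β (m+1) k) * T^k)
          + (∑ k ∈ Finset.range (m+2), (lR * sco α β (m+1) k) * T^k))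
        + ((∑ k ∈ Finset.range (m+1), (-(α+1)*((k:ℝ)+1)*sco α β (m+1) (k+1)) * T^k)
          + (∑ k ∈ Finset.range (m+1), (-(k:ℝ)*((k:ℝ)+1)*sco α β (m+1) (k+1)) * T^k)) := by
        ring
    _ = (∑ k ∈ Finset.range (m+1),
            (((m:ℝ)+1-(k:ℝ)) * ((m:ℝ)+1+(k:ℝ)+α+β+1) * sco α β (m+1) k) * T^k)
        + (∑ k ∈ Finset.range (m+1),
            (-(((k:ℝ)+1)*((k:ℝ)+α+1)) * sco α β (m+1) (k+1)) * T^k) := by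
        rw [g1, g2]
    _ = ∑ k ∈ Finset.range (m+1),
          (poch (β+1) (m+1) * poch (α+β+2) (m+1)
            / (poch (α+1) m * Nat.factorial (m+1)) * aco α (β+2) m k) * T^k := by
        rw [← Finset.sum_add_distrib]
        refine Finset.sum_congr rfl fun k hk => ?_
        have hkm : k ≤ m := by simpa using Nat.lt_succ_iff.mp (Finset.mem_range.mp hk)
        have := key α β hα hβ m k hkm
        rw [show ((m:ℝ)+1-(k:ℝ)) * ((m:ℝ)+1+(k:ℝ)+α+β+1) * sco α β (m+1) k * T^k
              + -(((k:ℝ)+1)*((k:ℝ)+α+1)) * sco α β (m+1) (k+1) * T^k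
            = (((m:ℝ)+1-(k:ℝ)) * ((m:ℝ)+1+(k:ℝ)+α+β+1) * sco α β (m+1) k
              - ((k:ℝ)+1)*((k:ℝ)+α+1) * sco α β (m+1) (k+1)) * T^k from by ring, this]
    _ = poch (β+1) (m+1) * poch (α+β+2) (m+1)
          / (poch (α+1) m * Nat.factorial (m+1))
        * ∑ k ∈ Finset.range (m+1), aco α (β+2) m k * T^k := by
        rw [Finset.mul_sum]
        exact Finset.sum_congr rfl fun k _ => by ring
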